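/- arXiv:2312.15370 — 3 statements merged into one kernel-verified Lean document; each statement's English description precedes it below -/
import Mathlib

section
/- Let $\mathbf{A} = (A_i)_{i \in [m]}$ be a system of events in a probability space with $\Pr(A_i) > 0$ for all $i$, and let $\mathbf{D}$ be a directed graph on vertex set $[m]$ with closed neighborhoods $D_i$. Define the mixing coefficient $\varphi = \max_{i \in [m]} |\Pr(\bigcup_{j \in [i-1] \setminus D_i} A_j \mid A_i) - \Pr(\bigcup_{j \in [i-1] \setminus D_i} A_j)|$ and declustering coefficients $\Delta_1 = \sum_{i \in [m]} \sum_{j \in [i-1] \cap D_i} \Pr(A_i \cap A_j)$ and $\Delta_2 = \sum_{i \in [m]} \sum_{j \in [i-1] \cap D_i} \Pr(A_i)\Pr(A_j)$. Then $|\Pr(\bigcap_{i \in [m]} \overline{A_i}) - \prod_{i \in [m]} \Pr(\overline{A_i})| \leq (1 - \prod_{i \in [m]} \Pr(\overline{A_i})) \varphi + \max\{\Delta_1, \Delta_2\}$. -/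
open MeasureTheory Finset

/-!
Write `qᵢ = P(Aᵢᶜ)`, `wᵢ = ∏_{j > i} qⱼ`, `Uᵢ = ⋃_{j < i} Aⱼ` and
`Cov(s, t) = P(s ∩ t) - P(s) P(t)`.
Telescoping `P(⋂_{j < k} Aⱼᶜ) · ∏_{j ≥ k} qⱼ` over `k` gives
`P(⋂ Aᵢᶜ) - ∏ qᵢ = ∑ᵢ wᵢ Cov(Aᵢ, Uᵢ)`, because `Cov(Uᵢᶜ, Aᵢᶜ) = Cov(Aᵢ, Uᵢ)`; the same telescoping
with `P(⋂_{j < k} Aⱼᶜ)` replaced by `1` gives `1 - ∏ qᵢ = ∑ᵢ wᵢ P(Aᵢ)`.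
Let `Bᵢ ⊆ Uᵢ` be the union of the earlier events outside `Dᵢ`. Then
`Cov(Aᵢ, Uᵢ) = Cov(Aᵢ, Bᵢ) + Cov(Aᵢ, Uᵢ \ Bᵢ)`; the first term is at most `P(Aᵢ) φ` in absolute
value, and since `Uᵢ \ Bᵢ` is covered by the earlier events inside `Dᵢ`, the second lies between
`-P(Aᵢ) ∑ P(Aⱼ)` and `∑ P(Aᵢ ∩ Aⱼ)`. As `0 ≤ wᵢ ≤ 1`, summing over `i` gives the bound.
-/

namespace Fin

theorem sub_mul_prod_eq_sum_mul_prod_Ioi {R : Type*} [CommRing R] :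
    ∀ {m : ℕ} (I : ℕ → R) (q : Fin m → R),
      I m - I 0 * ∏ j, q j = ∑ i : Fin m, (I (i + 1) - I i * q i) * ∏ j ∈ Ioi i, q j
  | 0, I, q => by simp
  | m + 1, I, q => by
    have ih := sub_mul_prod_eq_sum_mul_prod_Ioi (fun k => I (k + 1)) (fun j => q j.succ)
    simp only [sum_univ_succ, prod_univ_succ, prod_Ioi_succ, prod_Ioi_zero, val_succ,
      val_zero] at ih ⊢
    linear_combination ih

theorem one_sub_prod_eq_sum_mul_prod_Ioi {R : Type*} [CommRing R] {m : ℕ} (q : Fin m → R) :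
    1 - ∏ j, q j = ∑ i : Fin m, (1 - q i) * ∏ j ∈ Ioi i, q j := by
  simpa using sub_mul_prod_eq_sum_mul_prod_Ioi (fun _ => (1 : R)) q

end Fin

theorem abs_sum_mul_le_of_abs_le {ι : Type*} (s : Finset ι) {e a w : ι → ℝ} {φ : ℝ}
    (hw : ∀ i ∈ s, 0 ≤ w i) (he : ∀ i ∈ s, |e i| ≤ a i * φ) :
    |∑ i ∈ s, e i * w i| ≤ (∑ i ∈ s, a i * w i) * φ := by
  calc |∑ i ∈ s, e i * w i| ≤ ∑ i ∈ s, |e i| * w i := by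
        refine (abs_sum_le_sum_abs _ _).trans (sum_le_sum fun i hi => ?_)
        rw [abs_mul, abs_of_nonneg (hw i hi)]
    _ ≤ ∑ i ∈ s, a i * φ * w i := sum_le_sum fun i hi => by gcongr; exacts [hw i hi, he i hi]
    _ = (∑ i ∈ s, a i * w i) * φ := by rw [sum_mul]; exact sum_congr rfl fun i _ => by ring

theorem abs_sum_mul_le_max {ι : Type*} (s : Finset ι) {r x y w : ι → ℝ}
    (hw : ∀ i ∈ s, w i ∈ Set.Icc 0 1) (hr : ∀ i ∈ s, r i ∈ Set.Icc (-y i) (x i))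
    (hx : ∀ i ∈ s, 0 ≤ x i) (hy : ∀ i ∈ s, 0 ≤ y i) :
    |∑ i ∈ s, r i * w i| ≤ max (∑ i ∈ s, x i) (∑ i ∈ s, y i) := by
  have hrw : ∀ i ∈ s, r i * w i ∈ Set.Icc (-y i) (x i) := fun i hi => by
    rw [mul_comm]
    exact (convex_Icc _ _).smul_mem_of_zero_mem ⟨by linarith [hy i hi], hx i hi⟩ (hr i hi)
      (hw i hi)
  refine abs_le.2 ⟨?_, (sum_le_sum fun i hi => (hrw i hi).2).trans (le_max_left _ _)⟩
  calc -max (∑ i ∈ s, x i) (∑ i ∈ s, y i) ≤ ∑ i ∈ s, -y i := by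
        rw [sum_neg_distrib]; exact neg_le_neg (le_max_right _ _)
    _ ≤ ∑ i ∈ s, r i * w i := sum_le_sum fun i hi => (hrw i hi).1

namespace MeasureTheory

variable {Ω : Type*} [MeasurableSpace Ω] {μ : Measure Ω} {s t u : Set Ω}

def eventCov (μ : Measure Ω) (s t : Set Ω) : ℝ := μ.real (s ∩ t) - μ.real s * μ.real t

theorem eventCov_comm : eventCov μ s t = eventCov μ t s := by
  simp only [eventCov, Set.inter_comm, mul_comm]

theorem eventCov_compl_compl [IsProbabilityMeasure μ] (hs : MeasurableSet s)
    (ht : MeasurableSet t) : eventCov μ sᶜ tᶜ = eventCov μ s t := by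
  have hunion := measureReal_union_add_inter (μ := μ) (s := s) ht
  rw [eventCov, eventCov, ← Set.compl_union, probReal_compl_eq_one_sub (hs.union ht),
    probReal_compl_eq_one_sub hs, probReal_compl_eq_one_sub ht]
  linarith

theorem eventCov_eq_add_sdiff [IsFiniteMeasure μ] (ht : MeasurableSet t) (htu : t ⊆ u) :
    eventCov μ s u = eventCov μ s t + eventCov μ s (u \ t) := by
  have h₁ := measureReal_inter_add_sdiff (μ := μ) (s := s ∩ u) ht
  have h₂ := measureReal_sdiff_add_inter (μ := μ) (s := u) ht
  rw [Set.inter_assoc, Set.inter_eq_right.2 htu, Set.inter_sdiff_assoc] at h₁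
  rw [Set.inter_eq_right.2 htu] at h₂
  simp only [eventCov]
  linear_combination -h₁ + μ.real s * h₂

theorem eventCov_mem_Icc_of_subset_biUnion [IsFiniteMeasure μ] {ι : Type*} {N : Finset ι}
    {A : ι → Set Ω} (ht : t ⊆ ⋃ j ∈ N, A j) :
    eventCov μ s t ∈
      Set.Icc (-(μ.real s * ∑ j ∈ N, μ.real (A j))) (∑ j ∈ N, μ.real (s ∩ A j)) := by
  have hinter : μ.real (s ∩ t) ≤ ∑ j ∈ N, μ.real (s ∩ A j) := by
    refine (measureReal_mono ?_ (measure_ne_top _ _)).trans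
      (measureReal_biUnion_finset_le N fun j => s ∩ A j)
    rw [← Set.inter_iUnion₂]
    exact Set.inter_subset_inter_right s ht
  have ht_le : μ.real t ≤ ∑ j ∈ N, μ.real (A j) :=
    (measureReal_mono ht (measure_ne_top _ _)).trans (measureReal_biUnion_finset_le N A)
  have hs := measureReal_nonneg (μ := μ) (s := s)
  constructor <;> simp only [eventCov]
  · nlinarith [measureReal_nonneg (μ := μ) (s := s ∩ t)]
  · nlinarith [measureReal_nonneg (μ := μ) (s := t)]

theorem abs_eventCov_le [IsFiniteMeasure μ] {φ : ℝ}
    (h : |μ.real (t ∩ s) / μ.real s - μ.real t| ≤ φ) : |eventCov μ s t| ≤ μ.real s * φ := by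
  have hs := measureReal_nonneg (μ := μ) (s := s)
  rcases hs.eq_or_lt with hs0 | hs0
  -- the quotient in `h` is junk here, but `eventCov μ s t` and the bound both vanish
  · have : μ.real (s ∩ t) = 0 :=
      le_antisymm (hs0 ▸ measureReal_mono Set.inter_subset_left) measureReal_nonneg
    simp [eventCov, this, ← hs0]
  · have : eventCov μ s t = μ.real s * (μ.real (t ∩ s) / μ.real s - μ.real t) := by
      rw [eventCov, Set.inter_comm]; field_simp
    rw [this, abs_mul, abs_of_pos hs0]
    exact mul_le_mul_of_nonneg_left h hs

theorem measureReal_iInter_compl_sub_prod [IsProbabilityMeasure μ] {m : ℕ} {A : Fin m → Set Ω}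
    (hA : ∀ i, MeasurableSet (A i)) :
    μ.real (⋂ i, (A i)ᶜ) - ∏ i, μ.real (A i)ᶜ
      = ∑ i, eventCov μ (A i) (⋃ j < i, A j) * ∏ j ∈ Ioi i, μ.real (A j)ᶜ := by
  set I : ℕ → ℝ := fun k => μ.real (⋂ j : Fin m, ⋂ (_ : (j : ℕ) < k), (A j)ᶜ)
  have hI : ∀ i : Fin m, I i = μ.real (⋃ j < i, A j)ᶜ := fun i => by
    simp only [I, Set.compl_iUnion, Fin.lt_def]
  have hI_succ : ∀ i : Fin m, I (i + 1) = μ.real ((⋃ j < i, A j)ᶜ ∩ (A i)ᶜ) := fun i => by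
    simp only [I]
    congr 1; ext ω
    simp [le_iff_lt_or_eq, or_imp, forall_and, Fin.val_inj]
  have hU : ∀ i : Fin m, MeasurableSet (⋃ j < i, A j) := fun i =>
    MeasurableSet.iUnion fun j => MeasurableSet.iUnion fun _ => hA j
  have h0 : I 0 = 1 := by simp [I]
  have hm : I m = μ.real (⋂ i, (A i)ᶜ) := by simp [I]
  have key := Fin.sub_mul_prod_eq_sum_mul_prod_Ioi I (fun j => μ.real (A j)ᶜ)
  rw [h0, hm, one_mul] at key
  rw [key]
  refine sum_congr rfl fun i _ => ?_
  rw [hI, hI_succ, ← eventCov, eventCov_compl_compl (hU i) (hA i), eventCov_comm]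

end MeasureTheory

theorem stmt0_general {Ω : Type*} [MeasurableSpace Ω] (μ : Measure Ω) [IsProbabilityMeasure μ]
    (m : ℕ) (A : Fin m → Set Ω) (hAmeas : ∀ i, MeasurableSet (A i))
    (D : Fin m → Finset (Fin m))
    (φ Δ₁ Δ₂ : ℝ)
    (hφ : ∀ i : Fin m,
      |(μ ((⋃ j ∈ Finset.univ.filter (fun j => j < i ∧ j ∉ D i), A j) ∩ A i)).toReal
          / (μ (A i)).toReal
        - (μ (⋃ j ∈ Finset.univ.filter (fun j => j < i ∧ j ∉ D i), A j)).toReal| ≤ φ)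
    (hΔ₁ : Δ₁ = ∑ i : Fin m, ∑ j ∈ (Finset.univ.filter (fun j => j < i)) ∩ D i,
      (μ (A i ∩ A j)).toReal)
    (hΔ₂ : Δ₂ = ∑ i : Fin m, ∑ j ∈ (Finset.univ.filter (fun j => j < i)) ∩ D i,
      (μ (A i)).toReal * (μ (A j)).toReal) :
    |(μ (⋂ i : Fin m, (A i)ᶜ)).toReal - ∏ i : Fin m, (μ ((A i)ᶜ)).toReal|
      ≤ (1 - ∏ i : Fin m, (μ ((A i)ᶜ)).toReal) * φ + max Δ₁ Δ₂ := by
  simp only [← measureReal_def, ← mul_sum] at hφ hΔ₁ hΔ₂ ⊢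
  set B : Fin m → Set Ω := fun i => ⋃ j ∈ univ.filter (fun j => j < i ∧ j ∉ D i), A j
  have hB : ∀ i, MeasurableSet (B i) := fun i => measurableSet_biUnion _ fun j _ => hAmeas j
  have hBU : ∀ i, B i ⊆ ⋃ j < i, A j := fun i => by
    intro ω
    simpa [B] using fun j hj _ hω => ⟨j, hj, hω⟩
  have hUB : ∀ i, (⋃ j < i, A j) \ B i ⊆ ⋃ j ∈ univ.filter (· < i) ∩ D i, A j := fun i => by
    intro ω
    simpa [B] using fun j hj hω hωB => ⟨j, ⟨hj, by_contra fun hjD => hωB j hj hjD hω⟩, hω⟩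
  have hw : ∀ i, ∏ j ∈ Ioi i, μ.real (A j)ᶜ ∈ Set.Icc 0 1 := fun i =>
    ⟨prod_nonneg fun _ _ => measureReal_nonneg,
      prod_le_one (fun _ _ => measureReal_nonneg) fun _ _ => measureReal_le_one⟩
  have hmass : 1 - ∏ i, μ.real (A i)ᶜ = ∑ i, μ.real (A i) * ∏ j ∈ Ioi i, μ.real (A j)ᶜ := by
    simp only [Fin.one_sub_prod_eq_sum_mul_prod_Ioi, probReal_compl_eq_one_sub (hAmeas _),
      sub_sub_cancel]
  rw [measureReal_iInter_compl_sub_prod hAmeas, hmass, hΔ₁, hΔ₂]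
  simp only [eventCov_eq_add_sdiff (hB _) (hBU _), add_mul, sum_add_distrib]
  refine (abs_add_le _ _).trans (add_le_add ?_ ?_)
  · exact abs_sum_mul_le_of_abs_le _ (fun i _ => (hw i).1) fun i _ => abs_eventCov_le (hφ i)
  · exact abs_sum_mul_le_max _ (fun i _ => hw i)
      (fun i _ => eventCov_mem_Icc_of_subset_biUnion (hUB i))
      (fun _ _ => sum_nonneg fun _ _ => measureReal_nonneg)
      (fun _ _ => mul_nonneg measureReal_nonneg (sum_nonneg fun _ _ => measureReal_nonneg))

/-- **Extremal independence bound (Isaev–Rodionov–Zhang–Zhukovskii).**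
For a system of events `A i`, `i ∈ [m]`, with positive probabilities and a (directed)
dependency graph given by closed neighbourhoods `D i ∋ i`, with mixing coefficient `φ`
and declustering coefficients `Δ₁`, `Δ₂`, one has
`|P(⋂ Aᵢᶜ) - ∏ P(Aᵢᶜ)| ≤ (1 - ∏ P(Aᵢᶜ)) φ + max Δ₁ Δ₂`. -/
theorem stmt0 {Ω : Type*} [MeasurableSpace Ω] (μ : Measure Ω) [IsProbabilityMeasure μ]
    (m : ℕ) (A : Fin m → Set Ω) (hAmeas : ∀ i, MeasurableSet (A i))
    (hApos : ∀ i, 0 < (μ (A i)).toReal)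
    (D : Fin m → Finset (Fin m)) (hD : ∀ i, i ∈ D i)
    (φ Δ₁ Δ₂ : ℝ)
    (hφ : ∀ i : Fin m,
      |(μ ((⋃ j ∈ Finset.univ.filter (fun j => j < i ∧ j ∉ D i), A j) ∩ A i)).toReal
          / (μ (A i)).toReal
        - (μ (⋃ j ∈ Finset.univ.filter (fun j => j < i ∧ j ∉ D i), A j)).toReal| ≤ φ)
    (hΔ₁ : Δ₁ = ∑ i : Fin m, ∑ j ∈ (Finset.univ.filter (fun j => j < i)) ∩ D i,
      (μ (A i ∩ A j)).toReal)
    (hΔ₂ : Δ₂ = ∑ i : Fin m, ∑ j ∈ (Finset.univ.filter (fun j => j < i)) ∩ D i,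
      (μ (A i)).toReal * (μ (A j)).toReal) :
    |(μ (⋂ i : Fin m, (A i)ᶜ)).toReal - ∏ i : Fin m, (μ ((A i)ᶜ)).toReal|
      ≤ (1 - ∏ i : Fin m, (μ ((A i)ᶜ)).toReal) * φ + max Δ₁ Δ₂ :=
  stmt0_general μ m A hAmeas D φ Δ₁ Δ₂ hφ hΔ₁ hΔ₂
end

section
/- Let $D$ be a bipartite graph with parts $S$ and $T$ (identified with its edge set $D \subseteq S \times T$), let $\delta, \varepsilon \in (0,1)$, and define $S_{\mathrm{good}} = \{x \in S : \deg_D(x) \geq (1-\varepsilon)|D|/|S|\}$ and $T_{\mathrm{good}} = \{y \in T : \deg_D(y) \geq (1-\varepsilon)|D|/|T|\}$. If $|S_{\mathrm{good}}| \geq (1-\delta)|S|$ and $|T_{\mathrm{good}}| \geq (1-\delta)|T|$, then there exists a coupling $(X, Y)$ of the uniform distributions on $S$ and $T$ (i.e., a joint distribution with $X$ uniform on $S$ and $Y$ uniform on $T$) such that $\Pr(XY \notin D) \leq 2\varepsilon + 4\delta$. -/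
open Finset

noncomputable section CouplingAux

variable {S T : Type*} [Fintype S] [Fintype T] [Nonempty S] [Nonempty T]
  [DecidableEq S] [DecidableEq T]

def cpDeg1 (D : Finset (S × T)) (x : S) : ℝ := ((D.filter (fun e => e.1 = x)).card : ℝ)
def cpDeg2 (D : Finset (S × T)) (y : T) : ℝ := ((D.filter (fun e => e.2 = y)).card : ℝ)
def cpC1 (D : Finset (S × T)) (x : S) : ℝ :=
  min 1 ((D.card : ℝ) / (Fintype.card S * cpDeg1 D x))
def cpC2 (D : Finset (S × T)) (y : T) : ℝ :=
  min 1 ((D.card : ℝ) / (Fintype.card T * cpDeg2 D y))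
def cpMu (D : Finset (S × T)) (e : S × T) : ℝ :=
  if e ∈ D then cpC1 D e.1 * cpC2 D e.2 / (D.card : ℝ) else 0

set_option linter.unusedSectionVars false

lemma cpC1_nonneg (D : Finset (S × T)) (x : S) : 0 ≤ cpC1 D x :=
  le_min one_pos.le (by first | (unfold cpDeg1; positivity) | (unfold cpDeg2; positivity))

lemma cpC2_nonneg (D : Finset (S × T)) (y : T) : 0 ≤ cpC2 D y :=
  le_min one_pos.le (by first | (unfold cpDeg1; positivity) | (unfold cpDeg2; positivity))

lemma cpC1_le_one (D : Finset (S × T)) (x : S) : cpC1 D x ≤ 1 := min_le_left _ _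
lemma cpC2_le_one (D : Finset (S × T)) (y : T) : cpC2 D y ≤ 1 := min_le_left _ _

lemma cpMu_nonneg (D : Finset (S × T)) (e : S × T) : 0 ≤ cpMu D e := by
  unfold cpMu
  split
  · have := cpC1_nonneg D e.1
    have := cpC2_nonneg D e.2
    positivity
  · exact le_refl _

lemma cpFiber1 (D : Finset (S × T)) (x : S) :
    (univ.filter (fun y : T => (x, y) ∈ D)).card = (D.filter (fun e => e.1 = x)).card := by
  apply Finset.card_bij' (fun y _ => (x, y)) (fun e _ => e.2)
  · intro a ha; simp_all
  · intro a ha; simp only [mem_filter] at ha; simpa [mem_filter, ← ha.2] using ha.1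
  · intro a ha; simp
  · intro e he
    simp only [mem_filter] at he
    exact Prod.ext he.2.symm rfl

lemma cpFiber2 (D : Finset (S × T)) (y : T) :
    (univ.filter (fun x : S => (x, y) ∈ D)).card = (D.filter (fun e => e.2 = y)).card := by
  apply Finset.card_bij' (fun x _ => (x, y)) (fun e _ => e.1)
  · intro a ha; simp_all
  · intro a ha; simp only [mem_filter] at ha; simpa [mem_filter, ← ha.2] using ha.1
  · intro a ha; simp
  · intro e he
    simp only [mem_filter] at he
    exact Prod.ext rfl he.2.symm


lemma cpSumMu1 (D : Finset (S × T)) (hD : D.Nonempty) (x : S) :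
    ∑ y, cpMu D (x, y) ≤ 1 / (Fintype.card S : ℝ) := by
  have hn : (0:ℝ) < Fintype.card S := Nat.cast_pos.mpr Fintype.card_pos
  have hd : (0:ℝ) < D.card := Nat.cast_pos.mpr hD.card_pos
  have hsum : ∑ y, cpMu D (x, y)
      = ∑ y ∈ univ.filter (fun y : T => (x, y) ∈ D), cpC1 D x * cpC2 D y / (D.card : ℝ) := by
    rw [Finset.sum_filter]; rfl
  rw [hsum]
  by_cases h0 : (D.filter (fun e => e.1 = x)).card = 0
  · have : (univ.filter (fun y : T => (x, y) ∈ D)) = ∅ := by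
      rw [← Finset.card_eq_zero, cpFiber1, h0]
    rw [this, Finset.sum_empty]
    positivity
  · have hdeg : (0:ℝ) < cpDeg1 D x := by
      unfold cpDeg1
      exact_mod_cast Nat.pos_of_ne_zero h0
    have hbd : ∀ y ∈ univ.filter (fun y : T => (x, y) ∈ D),
        cpC1 D x * cpC2 D y / (D.card : ℝ) ≤ 1 / ((Fintype.card S : ℝ) * cpDeg1 D x) := by
      intro y _
      have h1 : cpC1 D x ≤ (D.card : ℝ) / ((Fintype.card S : ℝ) * cpDeg1 D x) := min_le_right _ _
      have h2 : cpC2 D y ≤ 1 := cpC2_le_one D y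
      have h3 : 0 ≤ cpC2 D y := cpC2_nonneg D y
      have h0' : 0 ≤ cpC1 D x := cpC1_nonneg D x
      calc cpC1 D x * cpC2 D y / (D.card : ℝ)
          ≤ ((D.card : ℝ) / ((Fintype.card S : ℝ) * cpDeg1 D x)) * 1 / (D.card : ℝ) := by gcongr
        _ = 1 / ((Fintype.card S : ℝ) * cpDeg1 D x) := by field_simp
    refine le_trans (Finset.sum_le_card_nsmul _ _ _ hbd) ?_
    rw [cpFiber1, nsmul_eq_mul]
    have : ((D.filter (fun e => e.1 = x)).card : ℝ) = cpDeg1 D x := rfl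
    rw [this]
    refine le_of_eq ?_
    field_simp

lemma cpSumMu2 (D : Finset (S × T)) (hD : D.Nonempty) (y : T) :
    ∑ x, cpMu D (x, y) ≤ 1 / (Fintype.card T : ℝ) := by
  have hn : (0:ℝ) < Fintype.card T := Nat.cast_pos.mpr Fintype.card_pos
  have hd : (0:ℝ) < D.card := Nat.cast_pos.mpr hD.card_pos
  have hsum : ∑ x, cpMu D (x, y)
      = ∑ x ∈ univ.filter (fun x : S => (x, y) ∈ D), cpC1 D x * cpC2 D y / (D.card : ℝ) := by
    rw [Finset.sum_filter]; rfl
  rw [hsum]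
  by_cases h0 : (D.filter (fun e => e.2 = y)).card = 0
  · have : (univ.filter (fun x : S => (x, y) ∈ D)) = ∅ := by
      rw [← Finset.card_eq_zero, cpFiber2, h0]
    rw [this, Finset.sum_empty]
    positivity
  · have hdeg : (0:ℝ) < cpDeg2 D y := by
      unfold cpDeg2
      exact_mod_cast Nat.pos_of_ne_zero h0
    have hbd : ∀ x ∈ univ.filter (fun x : S => (x, y) ∈ D),
        cpC1 D x * cpC2 D y / (D.card : ℝ) ≤ 1 / ((Fintype.card T : ℝ) * cpDeg2 D y) := by
      intro x _
      have h1 : cpC2 D y ≤ (D.card : ℝ) / ((Fintype.card T : ℝ) * cpDeg2 D y) := min_le_right _ _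
      have h2 : cpC1 D x ≤ 1 := cpC1_le_one D x
      have h3 : 0 ≤ cpC1 D x := cpC1_nonneg D x
      have h0' : 0 ≤ cpC2 D y := cpC2_nonneg D y
      calc cpC1 D x * cpC2 D y / (D.card : ℝ)
          ≤ 1 * ((D.card : ℝ) / ((Fintype.card T : ℝ) * cpDeg2 D y)) / (D.card : ℝ) := by gcongr
        _ = 1 / ((Fintype.card T : ℝ) * cpDeg2 D y) := by field_simp
    refine le_trans (Finset.sum_le_card_nsmul _ _ _ hbd) ?_
    rw [cpFiber2, nsmul_eq_mul]
    have : ((D.filter (fun e => e.2 = y)).card : ℝ) = cpDeg2 D y := rfl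
    rw [this]
    refine le_of_eq ?_
    field_simp

lemma cpSumC1 (D : Finset (S × T)) :
    ∑ e ∈ D, cpC1 D e.1 = ∑ x, cpDeg1 D x * cpC1 D x := by
  rw [← Finset.sum_fiberwise D (fun e => e.1) (fun e => cpC1 D e.1)]
  refine Finset.sum_congr rfl (fun x _ => ?_)
  rw [Finset.sum_congr rfl (fun e he => ?_), Finset.sum_const, nsmul_eq_mul]
  · rfl
  · show cpC1 D e.1 = cpC1 D x
    rw [(Finset.mem_filter.mp he).2]

lemma cpSumC2 (D : Finset (S × T)) :
    ∑ e ∈ D, cpC2 D e.2 = ∑ y, cpDeg2 D y * cpC2 D y := by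
  rw [← Finset.sum_fiberwise D (fun e => e.2) (fun e => cpC2 D e.2)]
  refine Finset.sum_congr rfl (fun y _ => ?_)
  rw [Finset.sum_congr rfl (fun e he => ?_), Finset.sum_const, nsmul_eq_mul]
  · rfl
  · show cpC2 D e.2 = cpC2 D y
    rw [(Finset.mem_filter.mp he).2]

lemma cpMuTot (D : Finset (S × T)) :
    ∑ e : S × T, cpMu D e = ∑ e ∈ D, cpC1 D e.1 * cpC2 D e.2 / (D.card : ℝ) := by
  unfold cpMu
  rw [Finset.sum_ite_mem, Finset.univ_inter]

end CouplingAux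

set_option maxHeartbeats 1000000

/-- **Coupling theorem for bipartite graphs, part 1.**
If in a bipartite graph `D ⊆ S × T` all but a `δ`-fraction of vertices on each side have
degree at least `(1-ε)` times the average, then there is a coupling `(X,Y)` of the uniform
distributions on `S` and `T` (encoded by its joint probability mass function `p`) with
`Pr(XY ∉ D) ≤ 2ε + 4δ`. -/
theorem stmt1 {S T : Type*} [Fintype S] [Fintype T] [Nonempty S] [Nonempty T]
    [DecidableEq S] [DecidableEq T]
    (D : Finset (S × T)) (hD : D.Nonempty) (δ ε : ℝ)
    (hδ : δ ∈ Set.Ioo (0:ℝ) 1) (hε : ε ∈ Set.Ioo (0:ℝ) 1)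
    (hS : (1 - δ) * Fintype.card S ≤
      ((Finset.univ.filter (fun x : S =>
        (1 - ε) * D.card / Fintype.card S ≤ ((D.filter (fun e => e.1 = x)).card : ℝ))).card : ℝ))
    (hT : (1 - δ) * Fintype.card T ≤
      ((Finset.univ.filter (fun y : T =>
        (1 - ε) * D.card / Fintype.card T ≤ ((D.filter (fun e => e.2 = y)).card : ℝ))).card : ℝ)) :
    ∃ p : S × T → ℝ, (∀ e, 0 ≤ p e) ∧
      (∀ x : S, ∑ y : T, p (x, y) = 1 / Fintype.card S) ∧
      (∀ y : T, ∑ x : S, p (x, y) = 1 / Fintype.card T) ∧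
      ∑ e ∈ Finset.univ \ D, p e ≤ 2 * ε + 4 * δ := by
  classical
  obtain ⟨hδ0, hδ1⟩ := hδ
  obtain ⟨hε0, hε1⟩ := hε
  have hn : (0:ℝ) < Fintype.card S := Nat.cast_pos.mpr Fintype.card_pos
  have hm : (0:ℝ) < Fintype.card T := Nat.cast_pos.mpr Fintype.card_pos
  have hd : (0:ℝ) < (D.card : ℝ) := Nat.cast_pos.mpr hD.card_pos
  set r : S → ℝ := fun x => 1 / (Fintype.card S : ℝ) - ∑ y, cpMu D (x, y) with hr_def
  set s : T → ℝ := fun y => 1 / (Fintype.card T : ℝ) - ∑ x, cpMu D (x, y) with hs_def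
  set R : ℝ := ∑ x, r x with hR_def
  have hrpos : ∀ x, 0 ≤ r x := fun x => sub_nonneg.mpr (cpSumMu1 D hD x)
  have hspos : ∀ y, 0 ≤ s y := fun y => sub_nonneg.mpr (cpSumMu2 D hD y)
  have hRpos : 0 ≤ R := Finset.sum_nonneg fun x _ => hrpos x
  have hRM : R = 1 - ∑ e : S × T, cpMu D e := by
    rw [hR_def, hr_def, Finset.sum_sub_distrib, Fintype.sum_prod_type]
    congr 1
    rw [Finset.sum_const, Finset.card_univ, nsmul_eq_mul]
    field_simp
  have hSM : ∑ y, s y = R := by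
    rw [hRM, hs_def, Finset.sum_sub_distrib, Fintype.sum_prod_type_right]
    congr 1
    rw [Finset.sum_const, Finset.card_univ, nsmul_eq_mul]
    field_simp
  -- per-good-vertex bounds
  have hgood1 : ∀ x : S, (1 - ε) * (D.card : ℝ) / (Fintype.card S : ℝ) ≤ cpDeg1 D x →
      (1 - ε) * (D.card : ℝ) / (Fintype.card S : ℝ) ≤ cpDeg1 D x * cpC1 D x := by
    intro x hx
    have hpos : 0 < cpDeg1 D x := lt_of_lt_of_le (div_pos (mul_pos (by linarith) hd) hn) hx
    unfold cpC1
    rcases min_cases (1:ℝ) ((D.card : ℝ) / ((Fintype.card S : ℝ) * cpDeg1 D x)) with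
      ⟨hmin, _⟩ | ⟨hmin, _⟩
    · rw [hmin, mul_one]; exact hx
    · rw [hmin]
      have heq : cpDeg1 D x * ((D.card : ℝ) / ((Fintype.card S : ℝ) * cpDeg1 D x))
          = (D.card : ℝ) / (Fintype.card S : ℝ) := by
        field_simp
      rw [heq]
      gcongr
      nlinarith
  have hgood2 : ∀ y : T, (1 - ε) * (D.card : ℝ) / (Fintype.card T : ℝ) ≤ cpDeg2 D y →
      (1 - ε) * (D.card : ℝ) / (Fintype.card T : ℝ) ≤ cpDeg2 D y * cpC2 D y := by
    intro y hy
    have hpos : 0 < cpDeg2 D y := lt_of_lt_of_le (div_pos (mul_pos (by linarith) hd) hm) hy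
    unfold cpC2
    rcases min_cases (1:ℝ) ((D.card : ℝ) / ((Fintype.card T : ℝ) * cpDeg2 D y)) with
      ⟨hmin, _⟩ | ⟨hmin, _⟩
    · rw [hmin, mul_one]; exact hy
    · rw [hmin]
      have heq : cpDeg2 D y * ((D.card : ℝ) / ((Fintype.card T : ℝ) * cpDeg2 D y))
          = (D.card : ℝ) / (Fintype.card T : ℝ) := by
        field_simp
      rw [heq]
      gcongr
      nlinarith
  -- lower bound on ∑ c1 over edges
  have hA : (1 - δ) * ((1 - ε) * (D.card : ℝ)) ≤ ∑ e ∈ D, cpC1 D e.1 := by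
    rw [cpSumC1 D]
    set Sg := Finset.univ.filter (fun x : S =>
        (1 - ε) * D.card / Fintype.card S ≤ ((D.filter (fun e => e.1 = x)).card : ℝ)) with hSg
    have step1 : ∑ _x ∈ Sg, ((1 - ε) * (D.card : ℝ) / (Fintype.card S : ℝ))
        ≤ ∑ x ∈ Sg, cpDeg1 D x * cpC1 D x :=
      Finset.sum_le_sum fun x hx => hgood1 x (Finset.mem_filter.mp hx).2
    have step2 : ∑ x ∈ Sg, cpDeg1 D x * cpC1 D x ≤ ∑ x, cpDeg1 D x * cpC1 D x :=
      Finset.sum_le_sum_of_subset_of_nonneg (Finset.filter_subset _ _)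
        (fun x _ _ => mul_nonneg (by unfold cpDeg1; positivity) (cpC1_nonneg D x))
    have hc : (0:ℝ) ≤ (1 - ε) * (D.card : ℝ) / (Fintype.card S : ℝ) :=
      div_nonneg (mul_nonneg (by linarith) hd.le) hn.le
    have step0 : (1 - δ) * ((1 - ε) * (D.card : ℝ))
        ≤ ∑ _x ∈ Sg, ((1 - ε) * (D.card : ℝ) / (Fintype.card S : ℝ)) := by
      rw [Finset.sum_const, nsmul_eq_mul]
      calc (1 - δ) * ((1 - ε) * (D.card : ℝ))
          = ((1 - δ) * (Fintype.card S : ℝ)) * ((1 - ε) * (D.card : ℝ) / (Fintype.card S : ℝ)) := by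
            field_simp
        _ ≤ (Sg.card : ℝ) * ((1 - ε) * (D.card : ℝ) / (Fintype.card S : ℝ)) :=
            mul_le_mul_of_nonneg_right hS hc
    linarith
  have hB : (1 - δ) * ((1 - ε) * (D.card : ℝ)) ≤ ∑ e ∈ D, cpC2 D e.2 := by
    rw [cpSumC2 D]
    set Tg := Finset.univ.filter (fun y : T =>
        (1 - ε) * D.card / Fintype.card T ≤ ((D.filter (fun e => e.2 = y)).card : ℝ)) with hTg
    have step1 : ∑ _y ∈ Tg, ((1 - ε) * (D.card : ℝ) / (Fintype.card T : ℝ))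
        ≤ ∑ y ∈ Tg, cpDeg2 D y * cpC2 D y :=
      Finset.sum_le_sum fun y hy => hgood2 y (Finset.mem_filter.mp hy).2
    have step2 : ∑ y ∈ Tg, cpDeg2 D y * cpC2 D y ≤ ∑ y, cpDeg2 D y * cpC2 D y :=
      Finset.sum_le_sum_of_subset_of_nonneg (Finset.filter_subset _ _)
        (fun y _ _ => mul_nonneg (by unfold cpDeg2; positivity) (cpC2_nonneg D y))
    have hc : (0:ℝ) ≤ (1 - ε) * (D.card : ℝ) / (Fintype.card T : ℝ) :=
      div_nonneg (mul_nonneg (by linarith) hd.le) hm.le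
    have step0 : (1 - δ) * ((1 - ε) * (D.card : ℝ))
        ≤ ∑ _y ∈ Tg, ((1 - ε) * (D.card : ℝ) / (Fintype.card T : ℝ)) := by
      rw [Finset.sum_const, nsmul_eq_mul]
      calc (1 - δ) * ((1 - ε) * (D.card : ℝ))
          = ((1 - δ) * (Fintype.card T : ℝ)) * ((1 - ε) * (D.card : ℝ) / (Fintype.card T : ℝ)) := by
            field_simp
        _ ≤ (Tg.card : ℝ) * ((1 - ε) * (D.card : ℝ) / (Fintype.card T : ℝ)) :=
            mul_le_mul_of_nonneg_right hT hc
    linarith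
  -- total mass lower bound
  have hMain : 1 - 2 * ε - 2 * δ ≤ ∑ e : S × T, cpMu D e := by
    rw [cpMuTot]
    have key : ∑ e ∈ D, (cpC1 D e.1 + cpC2 D e.2 - 1) ≤ ∑ e ∈ D, cpC1 D e.1 * cpC2 D e.2 :=
      Finset.sum_le_sum fun e _ => by
        nlinarith [cpC1_le_one D e.1, cpC2_le_one D e.2, cpC1_nonneg D e.1, cpC2_nonneg D e.2]
    have hsplit : ∑ e ∈ D, (cpC1 D e.1 + cpC2 D e.2 - 1)
        = (∑ e ∈ D, cpC1 D e.1) + (∑ e ∈ D, cpC2 D e.2) - (D.card : ℝ) := by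
      rw [Finset.sum_sub_distrib, Finset.sum_add_distrib, Finset.sum_const, nsmul_eq_mul, mul_one]
    rw [← Finset.sum_div, le_div_iff₀ hd]
    nlinarith [mul_nonneg (mul_nonneg hδ0.le hε0.le) hd.le]
  have hRle : R ≤ 2 * ε + 2 * δ := by rw [hRM]; linarith
  -- the coupling
  refine ⟨fun e => cpMu D e + r e.1 * s e.2 / R, ?_, ?_, ?_, ?_⟩
  · intro e
    exact add_nonneg (cpMu_nonneg D e)
      (div_nonneg (mul_nonneg (hrpos e.1) (hspos e.2)) hRpos)
  · intro x
    show (∑ y, (cpMu D (x, y) + r x * s y / R)) = 1 / (Fintype.card S : ℝ)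
    rw [Finset.sum_add_distrib, ← Finset.sum_div, ← Finset.mul_sum, hSM]
    have hx : r x * R / R = r x := by
      by_cases h : R = 0
      · have h0 : r x = 0 :=
          (Finset.sum_eq_zero_iff_of_nonneg (fun x _ => hrpos x)).mp (hR_def ▸ h) x
            (Finset.mem_univ x)
        rw [h0, h]; ring
      · rw [mul_div_assoc, div_self h, mul_one]
    rw [hx]
    have hrx : r x = 1 / (Fintype.card S : ℝ) - ∑ y, cpMu D (x, y) := by rw [hr_def]
    linarith
  · intro y
    show (∑ x, (cpMu D (x, y) + r x * s y / R)) = 1 / (Fintype.card T : ℝ)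
    rw [Finset.sum_add_distrib, ← Finset.sum_div, ← Finset.sum_mul, ← hR_def]
    have hy : R * s y / R = s y := by
      by_cases h : R = 0
      · have h0 : s y = 0 :=
          (Finset.sum_eq_zero_iff_of_nonneg (fun y _ => hspos y)).mp (hSM.trans h) y
            (Finset.mem_univ y)
        rw [h0, h]; ring
      · rw [mul_comm, mul_div_assoc, div_self h, mul_one]
    rw [hy]
    have hsy : s y = 1 / (Fintype.card T : ℝ) - ∑ x, cpMu D (x, y) := by rw [hs_def]
    linarith
  · have h1 : ∑ e ∈ Finset.univ \ D, (cpMu D e + r e.1 * s e.2 / R)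
        = ∑ e ∈ Finset.univ \ D, r e.1 * s e.2 / R := by
      refine Finset.sum_congr rfl fun e he => ?_
      have heD : e ∉ D := (Finset.mem_sdiff.mp he).2
      unfold cpMu
      rw [if_neg heD, zero_add]
    have h2 : ∑ e ∈ Finset.univ \ D, r e.1 * s e.2 / R ≤ ∑ e : S × T, r e.1 * s e.2 / R :=
      Finset.sum_le_sum_of_subset_of_nonneg (Finset.sdiff_subset) fun e _ _ =>
        div_nonneg (mul_nonneg (hrpos e.1) (hspos e.2)) hRpos
    have h3 : ∑ e : S × T, r e.1 * s e.2 / R ≤ R := by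
      by_cases h : R = 0
      · have : ∀ e : S × T, r e.1 * s e.2 / R = 0 := by
          intro e
          have h0 : r e.1 = 0 :=
            (Finset.sum_eq_zero_iff_of_nonneg (fun x _ => hrpos x)).mp (hR_def ▸ h) e.1
              (Finset.mem_univ e.1)
          rw [h0, zero_mul, zero_div]
        rw [Finset.sum_congr rfl fun e _ => this e, Finset.sum_const, smul_zero]
        exact hRpos
      · have : ∑ e : S × T, r e.1 * s e.2 / R = R := by
          rw [Fintype.sum_prod_type]
          have inner : ∀ x : S, ∑ y, r x * s y / R = r x := by
            intro x
            rw [← Finset.sum_div, ← Finset.mul_sum, hSM, mul_div_assoc, div_self h, mul_one]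
          rw [Finset.sum_congr rfl fun x _ => inner x]
        rw [this]
    calc ∑ e ∈ Finset.univ \ D, (cpMu D e + r e.1 * s e.2 / R) ≤ R := by rw [h1]; exact h2.trans h3
      _ ≤ 2 * ε + 4 * δ := by linarith
end

section
/- In the coupling construction for a bipartite graph $D \subseteq S \times T$ with good sets as above, the random vertex $\tilde{X}$ defined by: choosing a uniformly random edge $\hat{X}\hat{Y} \in D$, independently choosing $X'$ uniformly in $S_{\mathrm{good}}$, setting $\tilde{X} = X'$ if $\hat{X} \notin S_{\mathrm{good}}$, and otherwise setting $\tilde{X} = \hat{X}$ with probability $(1-\varepsilon)|D|/(|S| \deg_D(\hat{X}))$ and $\tilde{X} = X'$ otherwise, is uniformly distributed on $S_{\mathrm{good}}$. In particular, for each $x \in S_{\mathrm{good}}$, $\Pr(\xi_X = 1 \text{ and } \hat{X} = x) = (1-\varepsilon)/|S|$. -/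
open Finset

/-- **Uniformity of `X̃` in the coupling construction.**
Choose a uniformly random edge `X̂Ŷ ∈ D` (so `Pr(X̂ = x) = deg(x)/|D|`), independently a
uniform `X' ∈ S_good`; if `X̂ ∈ S_good`, accept it with probability
`q(x) = (1-ε)|D|/(|S| deg(x))` (the Bernoulli variable `ξ_X`), otherwise use `X'`.
Then `Pr(ξ_X = 1 and X̂ = x) = (1-ε)/|S|` for each `x ∈ S_good`, and the law of the
resulting vertex `X̃` is uniform on `S_good`. Below, `f x` is the explicit law of `X̃`. -/
theorem stmt3 {S T : Type*} [Fintype S] [Fintype T] [Nonempty S] [Nonempty T]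
    [DecidableEq S] [DecidableEq T]
    (D : Finset (S × T)) (hD : D.Nonempty) (ε : ℝ) (hε : ε ∈ Set.Ioo (0:ℝ) 1)
    (deg : S → ℝ) (hdeg : ∀ x : S, deg x = ((D.filter (fun e => e.1 = x)).card : ℝ))
    (Sgood : Finset S)
    (hSgood : Sgood = Finset.univ.filter
      (fun x : S => (1 - ε) * D.card / Fintype.card S ≤ deg x))
    (hSgood_ne : Sgood.Nonempty)
    (q : S → ℝ) (hq : ∀ x : S, q x = (1 - ε) * D.card / (Fintype.card S * deg x))
    (f : S → ℝ)
    (hf : ∀ x : S, f x =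
      (if x ∈ Sgood then deg x / D.card * q x else 0)
        + (1 / (Sgood.card : ℝ)) *
          ((∑ z ∈ Finset.univ \ Sgood, deg z / D.card)
            + ∑ z ∈ Sgood, deg z / D.card * (1 - q z))) :
    (∀ x ∈ Sgood, deg x / D.card * q x = (1 - ε) / Fintype.card S) ∧
      (∀ x ∈ Sgood, f x = 1 / (Sgood.card : ℝ)) := by
  obtain ⟨hε0, hε1⟩ := hε
  have hDpos : (0:ℝ) < D.card := by exact_mod_cast Finset.card_pos.mpr hD
  have hSpos : (0:ℝ) < Fintype.card S := by
    exact_mod_cast Fintype.card_pos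
  have hdegpos : ∀ x ∈ Sgood, 0 < deg x := by
    intro x hx
    rw [hSgood, Finset.mem_filter] at hx
    have h1e : (0:ℝ) < 1 - ε := by linarith
    have : 0 < (1 - ε) * D.card / Fintype.card S := by positivity
    linarith [hx.2]
  have key : ∀ x ∈ Sgood, deg x / D.card * q x = (1 - ε) / Fintype.card S := by
    intro x hx
    have hd := hdegpos x hx
    rw [hq]
    field_simp
  refine ⟨key, ?_⟩
  have hsum : ∑ z : S, deg z = D.card := by
    have h1 : ∑ z : S, deg z = ∑ z : S, ((D.filter (fun e => e.1 = z)).card : ℝ) :=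
      Finset.sum_congr rfl (fun x _ => hdeg x)
    rw [h1, ← Nat.cast_sum]
    congr 1
    exact (Finset.card_eq_sum_card_fiberwise
      (f := fun e : S × T => e.1) (s := D) (t := Finset.univ)
      (fun e _ => Finset.mem_univ _)).symm
  have hsub : Sgood ⊆ Finset.univ := Finset.subset_univ _
  have hsplit : (∑ z ∈ Finset.univ \ Sgood, deg z / D.card)
      + ∑ z ∈ Sgood, deg z / D.card = 1 := by
    rw [Finset.sum_sdiff hsub, ← Finset.sum_div, hsum, div_self hDpos.ne']
  have hgood : ∑ z ∈ Sgood, deg z / D.card * (1 - q z)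
      = (∑ z ∈ Sgood, deg z / D.card) - Sgood.card * ((1 - ε) / Fintype.card S) := by
    have : ∀ z ∈ Sgood, deg z / D.card * (1 - q z)
        = deg z / D.card - (1 - ε) / Fintype.card S := by
      intro z hz
      rw [mul_one_sub, key z hz]
    rw [Finset.sum_congr rfl this, Finset.sum_sub_distrib, Finset.sum_const,
      nsmul_eq_mul]
  intro x hx
  have hGpos : (0:ℝ) < Sgood.card := by exact_mod_cast Finset.card_pos.mpr hSgood_ne
  rw [hf, if_pos hx, key x hx, hgood]
  set k := (1 - ε) / (Fintype.card S : ℝ) with hk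
  have h2 : (∑ z ∈ Finset.univ \ Sgood, deg z / D.card)
      + ((∑ z ∈ Sgood, deg z / D.card) - Sgood.card * k) = 1 - Sgood.card * k := by
    linarith
  rw [add_comm (∑ z ∈ Finset.univ \ Sgood, deg z / (D.card:ℝ))] at h2 ⊢
  rw [h2]
  field_simp
  ring
end
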